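/- arXiv:1410.1653 — 3 statements merged into one kernel-verified Lean document; each statement's English description precedes it below -/
import Mathlib

section
/- If G is dual-critical, then for every proper subset T of V with |T| ≡ |E| (mod 2), G has a T-odd acyclic orientation. -/
variable {V : Type*}

/-- An orientation of a simple graph: a relation choosing a direction for each edge. -/
def IsOrientation (G : SimpleGraph V) (r : V → V → Prop) : Prop :=
  (∀ u v, G.Adj u v ↔ (r u v ∨ r v u)) ∧ ∀ u v, r u v → ¬ r v u

/-- A relation is acyclic if it has no directed cycle. -/
def AcyclicRel (r : V → V → Prop) : Prop := ∀ v, ¬ Relation.TransGen r v v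

/-- Indegree of a vertex in an orientation. -/
noncomputable def inDeg (r : V → V → Prop) (v : V) : ℕ := {u | r u v}.ncard

/-- Dual-critical: there is an acyclic orientation in which all vertices except one
have odd indegree. -/
def DualCritical (G : SimpleGraph V) : Prop :=
  ∃ r : V → V → Prop, IsOrientation G r ∧ AcyclicRel r ∧
    ∃ s : V, ∀ v : V, v ≠ s → Odd (inDeg r v)

/-- Dual-critical via a good ordering: an enumeration of all vertices such that every
vertex except the first has an odd number of neighbours among its predecessors. -/
def DualCriticalOrd (G : SimpleGraph V) : Prop :=
  ∃ (n : ℕ) (e : Fin n ≃ V), ∀ i : Fin n, 0 < i.val →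
    Odd ({j : Fin n | j < i ∧ G.Adj (e j) (e i)}.ncard)

/-- Number of edges between two (disjoint) vertex sets. -/
noncomputable def cut (G : SimpleGraph V) (A B : Set V) : ℕ :=
  {p : V × V | p.1 ∈ A ∧ p.2 ∈ B ∧ G.Adj p.1 p.2}.ncard

/-- A good `k`-partition: an ordered partition into nonempty classes such that each class
after the first is joined to the union of the previous ones by an odd number of edges. -/
def GoodPartition (G : SimpleGraph V) {k : ℕ} (P : Fin k → Set V) : Prop :=
  (∀ i, (P i).Nonempty) ∧ Pairwise (Function.onFun Disjoint P) ∧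
  (⋃ i, P i) = Set.univ ∧
  ∀ i : Fin k, 0 < i.val → Odd (cut G (⋃ j ∈ {j : Fin k | j < i}, P j) (P i))

def KDualCritical (G : SimpleGraph V) (k : ℕ) : Prop :=
  ∃ P : Fin k → Set V, GoodPartition G P

noncomputable def maxdc (G : SimpleGraph V) : ℕ := sSup {k | KDualCritical G k}

/-- A `T`-odd orientation: vertices in `T` have odd indegree, others even. -/
def TOdd (r : V → V → Prop) (T : Set V) : Prop :=
  ∀ v, (v ∈ T → Odd (inDeg r v)) ∧ (v ∉ T → Even (inDeg r v))

/-- Super-dual-critical: deleting any vertex leaves a dual-critical graph. -/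
def SuperDualCritical (G : SimpleGraph V) : Prop :=
  ∀ v : V, DualCriticalOrd (G.induce ({v}ᶜ : Set V))


/-!
An acyclic orientation of `G[s]` is encoded by a labelling `σ : V → ℤ` that separates adjacent
vertices of `s`: every edge points from the smaller to the larger label, and the indegree of `v`
is its back-degree, the number of neighbours in `s` with a smaller label. A dual-critical
orientation yields such a labelling with a root `a` of least label, every other vertex having odd
back-degree; the argument is an induction on `s`.

Let `w` be a vertex of largest label; its back-degree is its degree in `G[s]`, which is therefore
odd. If `w ∈ T`, realize `T \ {w}` on `G[s \ {w}]`, which is still dual-critical, and put `w`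
on top as a sink. If `w ∉ T`, the set `D` of vertices of odd degree in `G[s]` has even size and
contains `w`, so `T ∆ D` is realized in the first way; reversing that orientation (negating the
labels) turns each indegree `d` into `deg - d`, which changes its parity exactly on `D`, giving
`T`. The parity hypothesis `|T| ≡ |E| ≡ |V| - 1` is what keeps `T ∆ D` a proper subset.
-/

open Finset

lemma Finset.odd_card_symmDiff_add [DecidableEq V] {s t u : Finset V} (ht : Even #t)
    (h : Odd (#s + #u)) : Odd (#(symmDiff s t) + #u) := by
  rw [symmDiff_eq_sup_sdiff_inf, sup_eq_union, inf_eq_inter,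
    card_sdiff_of_subset inter_subset_union]
  have hcard := card_union_add_card_inter s t
  have hle := card_le_card (inter_subset_union (s := s) (t := t))
  obtain ⟨k, hk⟩ := ht
  rw [Nat.odd_iff] at h ⊢
  omega

lemma Finset.ssubset_of_odd_card_add {s t : Finset V} (h : s ⊆ t) (hpar : Odd (#s + #t)) :
    s ⊂ t :=
  ssubset_iff_subset_ne.2 ⟨h, fun heq => Nat.not_odd_iff_even.2 ⟨_, rfl⟩ (heq ▸ hpar)⟩

lemma Finset.erase_ssubset_erase_of_mem [DecidableEq V] {S s : Finset V} {w : V} (h : S ⊂ s)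
    (hw : w ∈ S) : S.erase w ⊂ s.erase w := by
  obtain ⟨x, hxs, hxS⟩ := exists_of_ssubset h
  refine (ssubset_iff_of_subset (erase_subset_erase w h.subset)).2 ⟨x, ?_, ?_⟩
  exacts [mem_erase.2 ⟨fun hxw => hxS (hxw ▸ hw), hxs⟩, fun hx => hxS (mem_of_mem_erase hx)]

lemma AcyclicRel.of_map_lt {α : Type*} [Preorder α] {r : V → V → Prop} (σ : V → α)
    (h : ∀ u v, r u v → σ u < σ v) : AcyclicRel r := by
  intro v hv
  suffices ∀ u w, Relation.TransGen r u w → σ u < σ w from lt_irrefl _ (this v v hv)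
  intro u w huw
  induction huw with
  | single h' => exact h _ _ h'
  | tail _ h' ih => exact ih.trans (h _ _ h')

lemma AcyclicRel.exists_map_lt [Finite V] {r : V → V → Prop} (hr : AcyclicRel r) :
    ∃ σ : V → ℤ, ∀ u v, r u v → σ u < σ v := by
  refine ⟨fun v => {u | Relation.TransGen r u v}.ncard, fun u v huv => ?_⟩
  have hsub : {x | Relation.TransGen r x u} ⊂ {x | Relation.TransGen r x v} :=
    Set.ssubset_iff_of_subset (fun x hx => hx.tail huv) |>.2
      ⟨u, Relation.TransGen.single huv, hr u⟩
  exact Int.ofNat_lt.2 (Set.ncard_lt_ncard hsub (Set.toFinite _))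

lemma IsOrientation.iff_adj_and_lt {G : SimpleGraph V} {r : V → V → Prop} {σ : V → ℤ}
    (hr : IsOrientation G r) (hσ : ∀ u v, r u v → σ u < σ v) (u v : V) :
    r u v ↔ G.Adj u v ∧ σ u < σ v := by
  refine ⟨fun h => ⟨(hr.1 u v).2 (Or.inl h), hσ u v h⟩, fun ⟨hadj, hlt⟩ => ?_⟩
  exact ((hr.1 u v).1 hadj).resolve_right fun h => (hσ v u h).not_gt hlt

namespace SimpleGraph

section Labelling

variable (G : SimpleGraph V)

def IsProperLabelling (s : Finset V) (σ : V → ℤ) : Prop :=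
  ∀ u ∈ s, ∀ v ∈ s, G.Adj u v → σ u ≠ σ v

lemma IsProperLabelling.mono {G : SimpleGraph V} {s s' : Finset V} {σ : V → ℤ}
    (hσ : G.IsProperLabelling s σ) (hs : s' ⊆ s) : G.IsProperLabelling s' σ :=
  fun u hu v hv => hσ u (hs hu) v (hs hv)

lemma IsProperLabelling.neg {G : SimpleGraph V} {s : Finset V} {σ : V → ℤ}
    (hσ : G.IsProperLabelling s σ) : G.IsProperLabelling s (-σ) :=
  fun u hu v hv huv => by simpa using hσ u hu v hv huv

lemma IsProperLabelling.isOrientation {G : SimpleGraph V} {σ : V → ℤ} [Fintype V]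
    (hσ : G.IsProperLabelling univ σ) :
    IsOrientation G fun u v => G.Adj u v ∧ σ u < σ v := by
  refine ⟨fun u v => ⟨fun hadj => ?_, ?_⟩, fun u v huv hvu => huv.2.not_gt hvu.2⟩
  · rcases (hσ u (mem_univ u) v (mem_univ v) hadj).lt_or_gt with h | h
    exacts [Or.inl ⟨hadj, h⟩, Or.inr ⟨hadj.symm, h⟩]
  · rintro (⟨hadj, -⟩ | ⟨hadj, -⟩)
    exacts [hadj, hadj.symm]

variable [DecidableRel G.Adj]

def backDegree (s : Finset V) (σ : V → ℤ) (v : V) : ℕ :=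
  #{u ∈ s | G.Adj u v ∧ σ u < σ v}

def degreeIn (s : Finset V) (v : V) : ℕ := #{u ∈ s | G.Adj u v}

structure IsDualCriticalLabelling (s : Finset V) (σ : V → ℤ) (a : V) : Prop where
  proper : G.IsProperLabelling s σ
  root_mem : a ∈ s
  root_lt : ∀ v ∈ s, v ≠ a → σ a < σ v
  odd_backDegree : ∀ v ∈ s, v ≠ a → Odd (G.backDegree s σ v)

structure IsOddLabelling (s T : Finset V) (σ : V → ℤ) : Prop where
  proper : G.IsProperLabelling s σ
  mem_iff_odd : ∀ v ∈ s, v ∈ T ↔ Odd (G.backDegree s σ v)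

variable {G} {s T : Finset V} {σ τ : V → ℤ} {a v w : V}

lemma backDegree_eq_zero_of_forall_le (h : ∀ u ∈ s, σ v ≤ σ u) :
    G.backDegree s σ v = 0 := by
  rw [backDegree, card_eq_zero, filter_eq_empty_iff]
  exact fun u hu ⟨_, hlt⟩ => (h u hu).not_gt hlt

lemma backDegree_congr (h : ∀ u ∈ s, σ u = τ u) (hv : σ v = τ v) :
    G.backDegree s σ v = G.backDegree s τ v := by
  rw [backDegree, backDegree, filter_congr fun u hu => by rw [h u hu, hv]]

lemma backDegree_insert_of_not_lt [DecidableEq V] (h : ¬ σ w < σ v) :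
    G.backDegree (insert w s) σ v = G.backDegree s σ v := by
  simp only [backDegree, filter_insert, h, and_false, if_false]

lemma backDegree_erase_of_not_lt [DecidableEq V] (h : ¬ σ w < σ v) :
    G.backDegree (s.erase w) σ v = G.backDegree s σ v := by
  rw [backDegree, backDegree, filter_erase, erase_eq_of_notMem]
  simp [h]

lemma sum_backDegree_neg :
    ∑ v ∈ s, G.backDegree s (-σ) v = ∑ v ∈ s, G.backDegree s σ v := by
  simp only [backDegree, card_filter, Pi.neg_apply, neg_lt_neg_iff]
  rw [sum_comm]
  refine sum_congr rfl fun v _ => sum_congr rfl fun u _ => ?_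
  simp only [G.adj_comm v u]

namespace IsProperLabelling

lemma backDegree_eq_degreeIn (hσ : G.IsProperLabelling s σ) (hv : v ∈ s)
    (hmax : ∀ u ∈ s, σ u ≤ σ v) : G.backDegree s σ v = G.degreeIn s v := by
  rw [backDegree, degreeIn, filter_congr fun u hu => and_iff_left_of_imp fun hadj =>
    (hmax u hu).lt_of_ne (hσ u hu v hv hadj)]

lemma backDegree_neg_add (hσ : G.IsProperLabelling s σ) (hv : v ∈ s) :
    G.backDegree s (-σ) v + G.backDegree s σ v = G.degreeIn s v := by
  rw [degreeIn, ← card_filter_add_card_filter_not (p := fun u => σ v < σ u), filter_filter,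
    filter_filter]
  congr 1
  · simp only [backDegree, Pi.neg_apply, neg_lt_neg_iff]
  · refine congrArg card (filter_congr fun u hu => ?_)
    exact ⟨fun ⟨hadj, hlt⟩ => ⟨hadj, hlt.not_gt⟩, fun ⟨hadj, hle⟩ =>
      ⟨hadj, (not_lt.1 hle).lt_of_ne (hσ u hu v hv hadj)⟩⟩

lemma two_mul_sum_backDegree (hσ : G.IsProperLabelling s σ) :
    2 * ∑ v ∈ s, G.backDegree s σ v = ∑ v ∈ s, G.degreeIn s v := by
  rw [two_mul]
  nth_rw 1 [← sum_backDegree_neg]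
  rw [← sum_add_distrib]
  exact sum_congr rfl fun v hv => hσ.backDegree_neg_add hv

lemma even_card_odd_degreeIn (hσ : G.IsProperLabelling s σ) :
    Even #{v ∈ s | Odd (G.degreeIn s v)} := by
  rw [← even_sum_iff_even_card_odd, ← hσ.two_mul_sum_backDegree]
  exact even_two_mul _

lemma card_edgeFinset_eq_sum_backDegree [Fintype V]
    (hσ : G.IsProperLabelling univ σ) : #G.edgeFinset = ∑ v, G.backDegree univ σ v := by
  have hdeg : ∀ v, G.degreeIn univ v = G.degree v := fun v => by
    rw [← card_neighborFinset_eq_degree, neighborFinset_eq_filter, degreeIn]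
    simp only [G.adj_comm]
  have h := hσ.two_mul_sum_backDegree
  simp only [hdeg, sum_degrees_eq_twice_card_edges] at h
  omega

end IsProperLabelling

lemma inDeg_eq_backDegree [Fintype V] {r : V → V → Prop}
    (hr : ∀ u v, r u v ↔ G.Adj u v ∧ σ u < σ v) (v : V) :
    inDeg r v = G.backDegree univ σ v := by
  rw [inDeg, backDegree, ← Set.ncard_coe_finset]
  congr 1
  ext u
  simp [hr]

lemma IsOddLabelling.tOdd [Fintype V] (h : G.IsOddLabelling univ T σ) :
    TOdd (fun u v => G.Adj u v ∧ σ u < σ v) T := by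
  intro v
  rw [inDeg_eq_backDegree (fun _ _ => Iff.rfl), ← Nat.not_odd_iff_even, mem_coe,
    h.mem_iff_odd v (mem_univ v)]
  exact ⟨id, id⟩

lemma IsOddLabelling.neg [DecidableEq V] (h : G.IsOddLabelling s T σ) :
    G.IsOddLabelling s (symmDiff T {v ∈ s | Odd (G.degreeIn s v)}) (-σ) := by
  refine ⟨h.proper.neg, fun v hv => ?_⟩
  have hsum := h.proper.backDegree_neg_add hv
  rw [mem_symmDiff, mem_filter, h.mem_iff_odd v hv, ← hsum, Nat.odd_add, ← Nat.not_odd_iff_even]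
  tauto

lemma IsOddLabelling.exists_insert [DecidableEq V] (h : G.IsOddLabelling s T σ) (hw : w ∉ s)
    (hodd : Odd (G.degreeIn (insert w s) w)) :
    ∃ τ, G.IsOddLabelling (insert w s) (insert w T) τ := by
  obtain ⟨M, hM⟩ : ∃ M, ∀ u ∈ s, σ u < M := by
    obtain ⟨M, hM⟩ := (s.image σ).bddAbove
    exact ⟨M + 1, fun u hu => Int.lt_add_one_of_le (hM (mem_image_of_mem σ hu))⟩
  set τ := Function.update σ w M
  have hτs : ∀ u ∈ s, τ u = σ u := fun u hu =>
    Function.update_of_ne (ne_of_mem_of_not_mem hu hw) _ _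
  have hτw : τ w = M := Function.update_self w M σ
  have hlt : ∀ u ∈ s, τ u < τ w := fun u hu => hτw ▸ hτs u hu ▸ hM u hu
  have hproper : G.IsProperLabelling (insert w s) τ := by
    intro u hu v hv hadj
    rcases mem_insert.1 hu with rfl | hu' <;> rcases mem_insert.1 hv with rfl | hv'
    · exact absurd hadj G.irrefl
    · exact (hlt v hv').ne'
    · exact (hlt u hu').ne
    · rw [hτs u hu', hτs v hv']; exact h.proper u hu' v hv' hadj
  refine ⟨τ, hproper, fun v hv => ?_⟩
  rcases mem_insert.1 hv with rfl | hv
  · refine iff_of_true (mem_insert_self v T) ?_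
    rwa [hproper.backDegree_eq_degreeIn hv fun u hu => ?_]
    rcases mem_insert.1 hu with rfl | hu
    exacts [le_rfl, (hlt u hu).le]
  · rw [backDegree_insert_of_not_lt (hlt v hv).not_gt, backDegree_congr hτs (hτs v hv),
      mem_insert, or_iff_right (ne_of_mem_of_not_mem hv hw), h.mem_iff_odd v hv]

namespace IsDualCriticalLabelling

lemma backDegree_root (h : G.IsDualCriticalLabelling s σ a) : G.backDegree s σ a = 0 :=
  backDegree_eq_zero_of_forall_le fun u hu =>
    (eq_or_ne u a).elim (fun hua => hua ▸ le_rfl) fun hua => (h.root_lt u hu hua).le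

lemma erase [DecidableEq V] (h : G.IsDualCriticalLabelling s σ a) (hwa : w ≠ a)
    (hmax : ∀ u ∈ s, σ u ≤ σ w) : G.IsDualCriticalLabelling (s.erase w) σ a where
  proper := h.proper.mono (erase_subset w s)
  root_mem := mem_erase.2 ⟨hwa.symm, h.root_mem⟩
  root_lt v hv := h.root_lt v (mem_of_mem_erase hv)
  odd_backDegree v hv hva := by
    rw [backDegree_erase_of_not_lt (hmax v (mem_of_mem_erase hv)).not_gt]
    exact h.odd_backDegree v (mem_of_mem_erase hv) hva

lemma odd_sum_backDegree_add_card (h : G.IsDualCriticalLabelling s σ a) :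
    Odd (∑ v ∈ s, G.backDegree s σ v + #s) := by
  classical
  have hrest : Even (∑ v ∈ s.erase a, G.backDegree s σ v + #(s.erase a)) := by
    rw [Nat.even_add, even_sum_iff_even_card_odd, filter_true_of_mem fun v hv =>
      h.odd_backDegree v (mem_of_mem_erase hv) (ne_of_mem_erase hv)]
  rw [← add_sum_erase s _ h.root_mem, h.backDegree_root, ← card_erase_add_one h.root_mem]
  simpa [add_assoc] using hrest.add_one

theorem exists_isOddLabelling [DecidableEq V] (h : G.IsDualCriticalLabelling s σ a)
    (hT : T ⊂ s) (hpar : Odd (#T + #s)) : ∃ τ, G.IsOddLabelling s T τ := by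
  induction s using Finset.strongInduction generalizing σ T with
  | H s ih =>
  by_cases hs : ∃ v ∈ s, v ≠ a
  swap
  · push Not at hs
    refine ⟨σ, h.proper, fun v hv => ?_⟩
    obtain rfl := hs v hv
    refine iff_of_false (fun hvT => not_subset_of_ssubset hT fun u hu => hs u hu ▸ hvT) ?_
    rw [h.backDegree_root]
    exact Nat.not_odd_zero
  obtain ⟨v, hv, hva⟩ := hs
  obtain ⟨w, hw, hmax⟩ := exists_max_image s σ ⟨v, hv⟩
  have hwa : w ≠ a := fun hwa => (h.root_lt v hv hva).not_ge (hwa ▸ hmax v hv)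
  have hodd : Odd (G.degreeIn s w) :=
    h.proper.backDegree_eq_degreeIn hw hmax ▸ h.odd_backDegree w hw hwa
  have hsink : ∀ S, w ∈ S → S ⊂ s → Odd (#S + #s) →
      ∃ τ, G.IsOddLabelling s S τ := by
    intro S hwS hSs hSpar
    have hpar' : Odd (#(S.erase w) + #(s.erase w)) := by
      have hS₀ := card_pos.2 ⟨w, hwS⟩
      have hs₀ := card_pos.2 ⟨w, hw⟩
      rw [card_erase_of_mem hwS, card_erase_of_mem hw, Nat.odd_iff]
      rw [Nat.odd_iff] at hSpar
      omega
    obtain ⟨τ, hτ⟩ :=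
      ih _ (erase_ssubset hw) (h.erase hwa hmax) (erase_ssubset_erase_of_mem hSs hwS) hpar'
    have := hτ.exists_insert (notMem_erase w s) (by rwa [insert_erase hw])
    rwa [insert_erase hw, insert_erase hwS] at this
  by_cases hwT : w ∈ T
  · exact hsink T hwT hT hpar
  set D := {v ∈ s | Odd (G.degreeIn s v)}
  have hpar' : Odd (#(symmDiff T D) + #s) :=
    odd_card_symmDiff_add h.proper.even_card_odd_degreeIn hpar
  have hsub : symmDiff T D ⊂ s := ssubset_of_odd_card_add
    (symmDiff_le_sup.trans (union_subset hT.subset (filter_subset _ s))) hpar'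
  obtain ⟨τ, hτ⟩ :=
    hsink _ (mem_symmDiff.2 (Or.inr ⟨mem_filter.2 ⟨hw, hodd⟩, hwT⟩)) hsub hpar'
  exact ⟨-τ, by simpa only [symmDiff_symmDiff_cancel_right] using hτ.neg⟩

end IsDualCriticalLabelling

end Labelling

end SimpleGraph

lemma DualCritical.exists_isDualCriticalLabelling [Fintype V] {G : SimpleGraph V}
    [DecidableRel G.Adj] (h : DualCritical G) :
    ∃ σ a, G.IsDualCriticalLabelling univ σ a := by
  obtain ⟨r, hr, hacyc, a, hodd⟩ := h
  obtain ⟨σ, hσ⟩ := hacyc.exists_map_lt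
  have hrσ := hr.iff_adj_and_lt hσ
  have hproper : G.IsProperLabelling univ σ := fun u _ v _ huv =>
    ((hr.1 u v).1 huv).elim (fun h => (hσ u v h).ne) fun h => (hσ v u h).ne'
  have hback : ∀ v, v ≠ a → Odd (G.backDegree univ σ v) := fun v hva =>
    SimpleGraph.inDeg_eq_backDegree hrσ v ▸ hodd v hva
  have hmin : ∀ v, (∀ u, σ v ≤ σ u) → v = a := fun v hv => by
    by_contra hva
    have := hback v hva
    rw [SimpleGraph.backDegree_eq_zero_of_forall_le fun u _ => hv u] at this
    exact Nat.not_odd_zero this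
  obtain ⟨m, -, hm⟩ := exists_min_image univ σ ⟨a, mem_univ a⟩
  have hm' : ∀ u, σ m ≤ σ u := fun u => hm u (mem_univ u)
  have ha : ∀ u, σ a ≤ σ u := hmin m hm' ▸ hm'
  refine ⟨σ, a, hproper, mem_univ a, fun v _ hva => (ha v).lt_of_ne fun heq => hva ?_,
    fun v _ => hback v⟩
  exact hmin v fun u => heq ▸ ha u

theorem stmt6 [Fintype V] (G : SimpleGraph V) (h : DualCritical G) :
    ∀ T : Set V, T ≠ Set.univ → T.ncard % 2 = G.edgeSet.ncard % 2 →
      ∃ r : V → V → Prop, IsOrientation G r ∧ AcyclicRel r ∧ TOdd r T := by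
  classical
  intro T hT hpar
  obtain ⟨σ, a, hσ⟩ := h.exists_isDualCriticalLabelling
  have hTodd : Odd (#T.toFinset + #(univ : Finset V)) := by
    have := hσ.odd_sum_backDegree_add_card
    rw [← hσ.proper.card_edgeFinset_eq_sum_backDegree] at this
    rw [Set.ncard_eq_toFinset_card', ← SimpleGraph.coe_edgeFinset, Set.ncard_coe_finset] at hpar
    rw [Nat.odd_iff] at this ⊢
    omega
  have hTs : T.toFinset ⊂ univ := by simpa [ssubset_univ_iff] using hT
  obtain ⟨τ, hτ⟩ := hσ.exists_isOddLabelling hTs hTodd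
  refine ⟨_, hτ.proper.isOrientation, AcyclicRel.of_map_lt τ fun _ _ => And.right, ?_⟩
  simpa using hτ.tOdd
end

section
/- A graph G = (V,E) admits a T-odd acyclic orientation for a given T ⊆ V if and only if the graph G' obtained from G by adding a new vertex v adjacent to all vertices of V \ T is dual-critical. -/
variable {V : Type*}

/-- The graph obtained from `G` by adding a new vertex (`none`) adjacent to all
vertices of `S`. -/
def addVertex (G : SimpleGraph V) (S : Set V) : SimpleGraph (Option V) where
  Adj x y := match x, y with
    | some u, some v => G.Adj u v
    | some u, none => u ∈ S
    | none, some v => v ∈ S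
    | none, none => False
  symm := by
    constructor
    intro x y h
    cases x <;> cases y <;> first | exact h | exact h.symm
  loopless := by
    constructor
    intro x h
    cases x with
    | none => exact h
    | some u => exact G.irrefl h

/-!
Along an acyclic orientation the vertices can be listed so that every edge points forward, and the
indegree of a vertex is then its number of earlier neighbours. So a `T`-odd acyclic orientation of
`G` is the same as an ordering of `V` in which a vertex has an odd number of earlier neighbours
exactly when it lies in `T`, and a dual-critical graph is one with such an ordering for the target
`{s}ᶜ`, `s` the first vertex. Putting the new vertex first, or deleting it, translates between
`T`-odd orderings of `G` and orderings of `G'` for the target `{none}ᶜ`.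

It remains to see that in a dual-critical graph any vertex can be put first. Both this and the
more general fact that a dual-critical ordering can be rearranged to realise any target `T` whose
complement is odd follow by removing the last vertex `x`: the prefix is again dual-critical, and
`x` has an odd number of neighbours in it. If `x ∈ T`, realise `T` on the prefix and append `x`;
otherwise put `x` first and realise on the prefix the target flipped at the neighbours of `x`,
whose complement is again odd.
-/

section

open scoped Classical symmDiff

variable {G : SimpleGraph V}

/-- Recursing on the head `v` shifts the parity of every later neighbour of `v`, hence the
target set is flipped on `G.neighborSet v`; unfolded, `IsTOddOrder G T l` says that a vertex has an
odd number of earlier neighbours in `l` iff it lies in `T` (`isTOddOrder_iff_forall_eq_append`). -/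
def IsTOddOrder (G : SimpleGraph V) : Set V → List V → Prop
  | _, [] => True
  | T, v :: l => v ∉ T ∧ IsTOddOrder G (T ∆ G.neighborSet v) l

@[simp] lemma isTOddOrder_nil (T : Set V) : IsTOddOrder G T [] := trivial

@[simp] lemma isTOddOrder_cons {T : Set V} {v : V} {l : List V} :
    IsTOddOrder G T (v :: l) ↔ v ∉ T ∧ IsTOddOrder G (T ∆ G.neighborSet v) l := Iff.rfl

lemma mem_symmDiff_neighborSet_iff_odd_iff {T : Set V} {v u : V} {n : ℕ} :
    (u ∈ T ∆ G.neighborSet v ↔ Odd n) ↔ (u ∈ T ↔ Odd (n + if G.Adj v u then 1 else 0)) := by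
  by_cases hu : u ∈ T <;> by_cases hvu : G.Adj v u <;>
    simp [Set.mem_symmDiff, hu, hvu, Nat.odd_add_one]

lemma isTOddOrder_append_singleton {T : Set V} {l : List V} {x : V} :
    IsTOddOrder G T (l ++ [x]) ↔
      IsTOddOrder G T l ∧ (x ∈ T ↔ Odd (l.countP (G.Adj · x))) := by
  induction l generalizing T with
  | nil => simp
  | cons v l ih =>
    simp only [List.cons_append, isTOddOrder_cons, ih, List.countP_cons, decide_eq_true_eq,
      mem_symmDiff_neighborSet_iff_odd_iff, and_assoc]

lemma isTOddOrder_iff_forall_eq_append {T : Set V} {l : List V} :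
    IsTOddOrder G T l ↔
      ∀ l₁ v l₂, l = l₁ ++ v :: l₂ → (v ∈ T ↔ Odd (l₁.countP (G.Adj · v))) := by
  induction l generalizing T with
  | nil => simp
  | cons w l ih =>
    rw [isTOddOrder_cons, ih]
    constructor
    · rintro ⟨hw, h⟩ (_ | ⟨a, l₁⟩) v l₂ heq <;> simp only [List.nil_append, List.cons_append,
        List.cons.injEq] at heq <;> obtain ⟨rfl, rfl⟩ := heq
      · simpa using hw
      · simpa [List.countP_cons, ← mem_symmDiff_neighborSet_iff_odd_iff]
          using h l₁ v l₂ rfl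
    · intro h
      refine ⟨by simpa using h [] w l rfl, fun l₁ v l₂ heq => ?_⟩
      simpa [heq, List.countP_cons, mem_symmDiff_neighborSet_iff_odd_iff]
        using h (w :: l₁) v l₂

lemma countP_notMem_symmDiff_neighborSet (l : List V) (T : Set V) (x : V) :
    l.countP (· ∉ T ∆ G.neighborSet x) % 2 = (l.countP (· ∉ T) + l.countP (G.Adj · x)) % 2 := by
  induction l with
  | nil => rfl
  | cons u l ih =>
    have hmem : u ∈ T ∆ G.neighborSet x ↔ (u ∈ T ↔ ¬ G.Adj u x) := by
      rw [Set.mem_symmDiff, SimpleGraph.mem_neighborSet, G.adj_comm]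
      tauto
    by_cases hu : u ∈ T <;> by_cases hux : G.Adj u x <;>
      simp only [List.countP_cons, decide_eq_true_eq, hmem, hu, hux, not_true_eq_false,
        not_false_eq_true, iff_true, iff_false, if_true, if_false] <;> omega

theorem IsTOddOrder.exists_perm {v : V} {t : List V} (hnd : (v :: t).Nodup)
    (hv : IsTOddOrder G {v}ᶜ (v :: t)) {T : Set V} (hT : Odd ((v :: t).countP (· ∉ T))) :
    ∃ l, l.Perm (v :: t) ∧ IsTOddOrder G T l := by
  induction t using List.reverseRecOn generalizing T with
  | nil =>
    have hvT : v ∉ T := fun h => by simp [h] at hT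
    exact ⟨[v], .rfl, hvT, trivial⟩
  | append_singleton t x ih =>
    rw [← List.cons_append] at hnd hv hT ⊢
    obtain ⟨hvt, hx⟩ := isTOddOrder_append_singleton.mp hv
    have hxv : x ≠ v := by
      rintro rfl
      exact (List.nodup_append.mp hnd).2.2 x List.mem_cons_self x (List.mem_singleton_self x) rfl
    have hx : Odd ((v :: t).countP (G.Adj · x)) := hx.mp hxv
    have hndt : (v :: t).Nodup := (List.nodup_append.mp hnd).1
    rw [List.countP_append] at hT
    by_cases hxT : x ∈ T
    · obtain ⟨l, hl, hlT⟩ := ih hndt hvt (T := T) (by simpa [hxT] using hT)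
      refine ⟨l ++ [x], hl.append_right [x], isTOddOrder_append_singleton.mpr ⟨hlT, ?_⟩⟩
      rw [hl.countP_eq]
      exact iff_of_true hxT hx
    · have hflip : Odd ((v :: t).countP (· ∉ T ∆ G.neighborSet x)) := by
        simp only [hxT, not_false_eq_true, List.countP_singleton, decide_true, if_true] at hT
        rw [Nat.odd_iff] at hT hx ⊢
        rw [countP_notMem_symmDiff_neighborSet]
        omega
      obtain ⟨l, hl, hlT⟩ := ih hndt hvt hflip
      exact ⟨x :: l, (hl.cons x).trans (List.perm_append_singleton x _).symm, hxT, hlT⟩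

theorem IsTOddOrder.exists_perm_cons {v : V} {t : List V} (hnd : (v :: t).Nodup)
    (hv : IsTOddOrder G {v}ᶜ (v :: t)) {w : V} (hw : w ∈ v :: t) :
    ∃ s, (w :: s).Perm (v :: t) ∧ IsTOddOrder G {w}ᶜ (w :: s) := by
  induction t using List.reverseRecOn with
  | nil =>
    obtain rfl : w = v := List.mem_singleton.mp hw
    exact ⟨[], .rfl, hv⟩
  | append_singleton t x ih =>
    rw [← List.cons_append] at hnd hv hw ⊢
    obtain ⟨hvt, hx⟩ := isTOddOrder_append_singleton.mp hv
    have hxt : x ∉ v :: t := fun h =>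
      (List.nodup_append.mp hnd).2.2 x h x (List.mem_singleton_self x) rfl
    have hx : Odd ((v :: t).countP (G.Adj · x)) := hx.mp (by rintro rfl; simp at hxt)
    have hndt : (v :: t).Nodup := (List.nodup_append.mp hnd).1
    rcases eq_or_ne w x with rfl | hwx
    · have hflip : Odd ((v :: t).countP (· ∉ {w}ᶜ ∆ G.neighborSet w)) := by
        rw [Nat.odd_iff] at hx ⊢
        rw [countP_notMem_symmDiff_neighborSet, List.countP_eq_zero.mpr, zero_add, hx]
        exact fun u hu => by simpa using ne_of_mem_of_not_mem hu hxt
      obtain ⟨s, hs, hsT⟩ := hvt.exists_perm hndt hflip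
      exact ⟨s, (hs.cons w).trans (List.perm_append_singleton w _).symm, by simp, hsT⟩
    · have hwt : w ∈ v :: t := by simpa [hwx] using hw
      obtain ⟨s, hs, hsT⟩ := ih hndt hvt hwt
      refine ⟨s ++ [x], hs.append_right [x], ?_⟩
      rw [← List.cons_append, isTOddOrder_append_singleton, hs.countP_eq]
      exact ⟨hsT, iff_of_true hwx.symm hx⟩

lemma List.Nodup.ncard_setOf_mem_and {l : List V} (hl : l.Nodup) (p : V → Prop) :
    {u | u ∈ l ∧ p u}.ncard = l.countP (p ·) := by
  have hset : {u | u ∈ l ∧ p u} = ↑(l.filter (p ·)).toFinset := by ext; simp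
  rw [hset, Set.ncard_coe_finset, List.toFinset_card_of_nodup (hl.filter _),
    List.countP_eq_length_filter]

lemma WellFounded.exists_nodup_pairwise {r : V → V → Prop} (hr : WellFounded r) (s : Finset V) :
    ∃ l : List V, l.Nodup ∧ (∀ v, v ∈ l ↔ v ∈ s) ∧ l.Pairwise fun a b => ¬ r b a := by
  induction s using Finset.strongInduction with
  | H s ih =>
    rcases s.eq_empty_or_nonempty with rfl | hs
    · exact ⟨[], List.nodup_nil, by simp, List.Pairwise.nil⟩
    obtain ⟨m, hm, hmin⟩ := hr.has_min s (by exact_mod_cast hs)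
    obtain ⟨l, hnd, hmem, hpw⟩ := ih (s.erase m) (Finset.erase_ssubset hm)
    refine ⟨m :: l, List.nodup_cons.mpr ⟨by simp [hmem], hnd⟩, fun v => ?_,
      List.pairwise_cons.mpr ⟨fun b hb => hmin b (Finset.mem_of_mem_erase ((hmem b).mp hb)), hpw⟩⟩
    rw [List.mem_cons, hmem, Finset.mem_erase]
    by_cases hv : v = m <;> simp [hv, Finset.mem_coe.mp hm]

lemma AcyclicRel.wellFounded [Finite V] {r : V → V → Prop} (hr : AcyclicRel r) : WellFounded r :=
  have : IsTrans V (Relation.TransGen r) := ⟨fun _ _ _ => Relation.TransGen.trans⟩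
  have : Std.Irrefl (Relation.TransGen r) := ⟨hr⟩
  Subrelation.wf Relation.TransGen.single (Finite.wellFounded_of_trans_of_irrefl _)

lemma IsOrientation.inDeg_eq_countP {r : V → V → Prop} (hr : IsOrientation G r)
    {l₁ l₂ : List V} {v : V} (hnd : (l₁ ++ v :: l₂).Nodup) (hcov : ∀ u, u ∈ l₁ ++ v :: l₂)
    (hpw : (l₁ ++ v :: l₂).Pairwise fun a b => ¬ r b a) :
    inDeg r v = l₁.countP (G.Adj · v) := by
  obtain ⟨-, hpw₂, hcross⟩ := List.pairwise_append.mp hpw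
  have hin : {u | r u v} = {u | u ∈ l₁ ∧ G.Adj u v} := by
    ext u
    constructor
    · intro huv
      have hadj : G.Adj u v := (hr.1 u v).mpr (Or.inl huv)
      refine ⟨?_, hadj⟩
      rcases List.mem_append.mp (hcov u) with hu | hu
      · exact hu
      rcases List.mem_cons.mp hu with rfl | hu
      · exact absurd hadj (G.loopless.irrefl u)
      · exact absurd huv ((List.pairwise_cons.mp hpw₂).1 u hu)
    · rintro ⟨hu, hadj⟩
      exact ((hr.1 u v).mp hadj).resolve_right (hcross u hu v List.mem_cons_self)
  rw [inDeg, hin, (List.nodup_append.mp hnd).1.ncard_setOf_mem_and]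

theorem IsOrientation.exists_isTOddOrder [Finite V] {r : V → V → Prop} (hr : IsOrientation G r)
    (hac : AcyclicRel r) {T : Set V} (hT : ∀ v, v ∈ T ↔ Odd (inDeg r v)) :
    ∃ l, l.Nodup ∧ (∀ v, v ∈ l) ∧ IsTOddOrder G T l := by
  have := Fintype.ofFinite V
  obtain ⟨l, hnd, hmem, hpw⟩ := hac.wellFounded.exists_nodup_pairwise Finset.univ
  have hcov : ∀ v, v ∈ l := by simp [hmem]
  refine ⟨l, hnd, hcov, isTOddOrder_iff_forall_eq_append.mpr fun l₁ v l₂ hl => ?_⟩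
  subst hl
  rw [hT, hr.inDeg_eq_countP hnd hcov hpw]

theorem IsTOddOrder.exists_orientation {T : Set V} {l : List V} (hl : IsTOddOrder G T l)
    (hnd : l.Nodup) (hcov : ∀ v, v ∈ l) :
    ∃ r, IsOrientation G r ∧ AcyclicRel r ∧ ∀ v, v ∈ T ↔ Odd (inDeg r v) := by
  let r u v := G.Adj u v ∧ l.idxOf u < l.idxOf v
  have hr : IsOrientation G r := by
    refine ⟨fun u v => ⟨fun huv => ?_, ?_⟩, fun u v huv hvu => huv.2.not_gt hvu.2⟩
    · have hne : l.idxOf u ≠ l.idxOf v := fun h => huv.ne ((List.idxOf_inj (hcov u)).mp h)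
      rcases hne.lt_or_gt with h | h
      exacts [Or.inl ⟨huv, h⟩, Or.inr ⟨huv.symm, h⟩]
    · rintro (⟨h, -⟩ | ⟨h, -⟩)
      exacts [h, h.symm]
  have hac : AcyclicRel r := by
    have hlt : ∀ u v, Relation.TransGen r u v → l.idxOf u < l.idxOf v := fun u v h => by
      induction h with
      | single h => exact h.2
      | tail _ h ih => exact ih.trans h.2
    exact fun v h => (hlt v v h).false
  have hpw : l.Pairwise fun a b => ¬ r b a := by
    refine List.pairwise_iff_getElem.mpr fun i j hi hj hij hji => ?_
    have hidx := hji.2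
    rw [hnd.idxOf_getElem, hnd.idxOf_getElem] at hidx
    exact hidx.not_gt hij
  refine ⟨r, hr, hac, fun v => ?_⟩
  obtain ⟨l₁, l₂, rfl⟩ := List.append_of_mem (hcov v)
  rw [isTOddOrder_iff_forall_eq_append.mp hl l₁ v l₂ rfl, hr.inDeg_eq_countP hnd hcov hpw]

theorem DualCritical.exists_isTOddOrder_cons [Finite V] (h : DualCritical G) (w : V) :
    ∃ l, (w :: l).Nodup ∧ (∀ v, v ∈ w :: l) ∧ IsTOddOrder G {w}ᶜ (w :: l) := by
  obtain ⟨r, hr, hac, s, hs⟩ := h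
  obtain ⟨_ | ⟨v, t⟩, hnd, hcov, hl⟩ := hr.exists_isTOddOrder hac (T := {v | Odd (inDeg r v)})
    fun _ => Iff.rfl
  · exact absurd (hcov w) List.not_mem_nil
  have hv : v ∉ {v | Odd (inDeg r v)} := hl.1
  have hodd : {v | Odd (inDeg r v)} = {v}ᶜ := by
    obtain rfl : v = s := by_contra fun h => hv (hs v h)
    ext u
    by_cases hu : u = v
    · simpa [hu] using hv
    · simpa [hu] using hs u hu
  rw [hodd] at hl
  obtain ⟨l, hperm, hwl⟩ := hl.exists_perm_cons hnd (hcov w)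
  exact ⟨l, hperm.nodup_iff.mpr hnd, fun u => hperm.mem_iff.mpr (hcov u), hwl⟩

lemma tOdd_iff {r : V → V → Prop} {T : Set V} : TOdd r T ↔ ∀ v, v ∈ T ↔ Odd (inDeg r v) :=
  forall_congr' fun v => by rw [← Nat.not_even_iff_odd]; tauto

lemma isTOddOrder_addVertex_map_some {S : Set V} {T : Set (Option V)} {l : List V} :
    IsTOddOrder (addVertex G S) T (l.map some) ↔ IsTOddOrder G (some ⁻¹' T) l := by
  induction l generalizing T with
  | nil => simp
  | cons v l ih =>
    rw [List.map_cons, isTOddOrder_cons, isTOddOrder_cons, ih, Set.preimage_symmDiff]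
    rfl

lemma isTOddOrder_addVertex_none_cons {T : Set V} {l : List V} :
    IsTOddOrder (addVertex G Tᶜ) {none}ᶜ (none :: l.map some) ↔ IsTOddOrder G T l := by
  have hadj (v : V) : some v ∈ (addVertex G Tᶜ).neighborSet none ↔ v ∉ T := Iff.rfl
  have hT : some ⁻¹' ({none}ᶜ ∆ (addVertex G Tᶜ).neighborSet none) = T := by
    ext v
    simp [Set.mem_symmDiff, hadj]
  rw [isTOddOrder_cons, isTOddOrder_addVertex_map_some, hT]
  simp

lemma List.exists_eq_map_some {l : List (Option V)} (h : none ∉ l) :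
    ∃ l' : List V, l = l'.map some := by
  induction l with
  | nil => exact ⟨[], rfl⟩
  | cons a l ih =>
    obtain ⟨b, rfl⟩ := Option.ne_none_iff_exists'.mp (ne_of_mem_of_not_mem List.mem_cons_self h)
    obtain ⟨l', rfl⟩ := ih (fun h' => h (List.mem_cons_of_mem _ h'))
    exact ⟨b :: l', rfl⟩

end

theorem stmt11 [Fintype V] (G : SimpleGraph V) (T : Set V) :
    (∃ r : V → V → Prop, IsOrientation G r ∧ AcyclicRel r ∧ TOdd r T) ↔
      DualCritical (addVertex G Tᶜ) := by
  constructor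
  · rintro ⟨r, hr, hac, hT⟩
    obtain ⟨l, hnd, hcov, hl⟩ := hr.exists_isTOddOrder hac (tOdd_iff.mp hT)
    obtain ⟨r', hr', hac', hr'T⟩ := (isTOddOrder_addVertex_none_cons.mpr hl).exists_orientation
      (by simpa using hnd.map (Option.some_injective V)) (by rintro (_ | v) <;> simp [hcov])
    exact ⟨r', hr', hac', none, fun v hv => (hr'T v).mp hv⟩
  · intro h
    obtain ⟨l, hnd, hcov, hl⟩ := h.exists_isTOddOrder_cons none
    obtain ⟨l, rfl⟩ := List.exists_eq_map_some (List.nodup_cons.mp hnd).1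
    obtain ⟨r, hr, hac, hrT⟩ := (isTOddOrder_addVertex_none_cons.mp hl).exists_orientation
      ((List.nodup_cons.mp hnd).2.of_map some) (fun v => by simpa using hcov (some v))
    exact ⟨r, hr, hac, tOdd_iff.mpr hrT⟩
end

section
/- Every graph G with maxdc(G) = k admits a good k-partition in which every class except possibly the first contains at most 2 vertices. -/
variable {V : Type*}

/-!
Induct on good partitions of an arbitrary vertex set `W` admitting no longer good partition.
Let `S` be the last class. If `|S| ≤ 2`, remove it and induct. Otherwise maximality forces
every `v ∈ S` to have an even number of neighbours in `S \ {v}`: else `S` could be split into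
the two classes `S \ {v}, {v}` or `{v}, S \ {v}`. A parity count in `ZMod 2` then yields
`A ⊆ S` with `|A| ≤ 2` such that merging `S \ A` into the previous class and keeping `A` as the
last class is again a good partition, and we remove `A` instead.
-/

section Cut

variable (G : SimpleGraph V)

lemma cut_comm (A B : Set V) : cut G A B = cut G B A := by
  have : {p : V × V | p.1 ∈ A ∧ p.2 ∈ B ∧ G.Adj p.1 p.2} =
      Prod.swap '' {p : V × V | p.1 ∈ B ∧ p.2 ∈ A ∧ G.Adj p.1 p.2} := by
    ext ⟨a, b⟩
    simp only [Set.mem_ofPred_eq, Set.image_swap_eq_preimage_swap, Set.mem_preimage,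
      Prod.fst_swap, Prod.snd_swap, G.adj_comm b a]
    tauto
  rw [cut, cut, this, Set.ncard_image_of_injective _ Prod.swap_injective]

variable [Finite V]

lemma cut_union_right (X : Set V) {B C : Set V} (h : Disjoint B C) :
    cut G X (B ∪ C) = cut G X B + cut G X C := by
  rw [cut, cut, cut, ← Set.ncard_union_eq _ (Set.toFinite _) (Set.toFinite _)]
  · congr 1
    ext p
    simp only [Set.mem_ofPred_eq, Set.mem_union]
    tauto
  · rw [Set.disjoint_left] at h ⊢
    rintro p ⟨-, hB, -⟩ ⟨-, hC, -⟩
    exact h hB hC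

lemma cut_union_left (X : Set V) {B C : Set V} (h : Disjoint B C) :
    cut G (B ∪ C) X = cut G B X + cut G C X := by
  rw [cut_comm, cut_union_right G X h, cut_comm G X B, cut_comm G X C]

lemma cut_finset_eq_sum (X : Set V) (s : Finset V) :
    cut G X ↑s = ∑ v ∈ s, cut G X {v} := by
  classical
  induction s using Finset.induction with
  | empty => simp [cut]
  | insert a s ha ih =>
    rw [Finset.sum_insert ha, Finset.coe_insert, Set.insert_eq,
      cut_union_right G X (by simpa using ha), ih]

end Cut

lemma Fin.biUnion_lt_castSucc {α : Type*} {m : ℕ} (f : Fin (m + 1) → Set α) (i : Fin m) :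
    ⋃ j ∈ {j | j < Fin.castSucc i}, f j = ⋃ j ∈ {j | j < i}, f (Fin.castSucc j) := by
  ext x
  simp [Fin.exists_fin_succ', (Fin.castSucc_lt_last i).not_gt]

lemma Fin.biUnion_lt_last {α : Type*} {m : ℕ} (f : Fin (m + 1) → Set α) :
    ⋃ j ∈ {j | j < Fin.last m}, f j = ⋃ j, f (Fin.castSucc j) := by
  ext x
  simp [Fin.exists_fin_succ']

lemma Fin.iUnion_eq_iUnion_castSucc_union_last {α : Type*} {m : ℕ} (f : Fin (m + 1) → Set α) :
    ⋃ i, f i = (⋃ j, f (Fin.castSucc j)) ∪ f (Fin.last m) := by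
  ext x
  simp [Fin.exists_fin_succ']

def GoodPartitionOn (G : SimpleGraph V) (W : Set V) {k : ℕ} (P : Fin k → Set V) : Prop :=
  (∀ i, (P i).Nonempty) ∧ Pairwise (Function.onFun Disjoint P) ∧
  (⋃ i, P i) = W ∧
  ∀ i : Fin k, 0 < i.val → Odd (cut G (⋃ j ∈ {j : Fin k | j < i}, P j) (P i))

lemma goodPartitionOn_snoc_iff {G : SimpleGraph V} {W A : Set V} {m : ℕ} {Q : Fin m → Set V} :
    GoodPartitionOn G W (Fin.snoc Q A) ↔ ∃ U, GoodPartitionOn G U Q ∧ A.Nonempty ∧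
      Disjoint U A ∧ W = U ∪ A ∧ (0 < m → Odd (cut G U A)) := by
  constructor
  · rintro ⟨hne, hdisj, hW, hodd⟩
    refine ⟨⋃ j, Q j, ⟨fun j => by simpa using hne j.castSucc, fun i j hij => ?_, rfl,
      fun i hi => ?_⟩, by simpa using hne (Fin.last m), ?_, ?_, fun hm => ?_⟩
    · simpa [Function.onFun] using hdisj (Fin.castSucc_injective m |>.ne hij)
    · simpa only [Fin.biUnion_lt_castSucc, Fin.snoc_castSucc] using hodd i.castSucc hi
    · refine Set.disjoint_iUnion_left.2 fun j => ?_
      simpa [Function.onFun] using hdisj (Fin.castSucc_lt_last j).ne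
    · rw [← hW, Fin.iUnion_eq_iUnion_castSucc_union_last]
      simp
    · simpa only [Fin.biUnion_lt_last, Fin.snoc_castSucc, Fin.snoc_last] using hodd (Fin.last m) hm
  · rintro ⟨U, ⟨hne, hdisj, rfl, hodd⟩, hA, hUA, rfl, hcut⟩
    refine ⟨Fin.lastCases (by simpa using hA) fun j => by simpa using hne j, ?_, ?_, ?_⟩
    · have hQA := Set.disjoint_iUnion_left.1 hUA
      intro i j hij
      cases i using Fin.lastCases <;> cases j using Fin.lastCases
      · exact absurd rfl hij
      · simpa [Function.onFun] using (hQA _).symm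
      · simpa [Function.onFun] using hQA _
      · simpa [Function.onFun] using hdisj (ne_of_apply_ne Fin.castSucc hij)
    · rw [Fin.iUnion_eq_iUnion_castSucc_union_last]
      simp
    · refine Fin.lastCases (fun hm => ?_) fun i hi => ?_
      · simpa only [Fin.biUnion_lt_last, Fin.snoc_castSucc, Fin.snoc_last] using hcut hm
      · simpa only [Fin.biUnion_lt_castSucc, Fin.snoc_castSucc] using hodd i hi

lemma Finset.exists_subset_card_le_two_sum_eq {α : Type*} (s : Finset α) (f g : α → ZMod 2)
    (hf : ∑ x ∈ s, f x = 1) :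
    ∃ a ⊆ s, a.card ≤ 2 ∧ ∑ x ∈ a, f x = 1 ∧ ∑ x ∈ a, g x = ∑ x ∈ s, g x := by
  classical
  set d := ∑ x ∈ s, g x
  by_cases hsingle : ∃ x ∈ s, f x = 1 ∧ g x = d
  · obtain ⟨x, hx, hfx, hgx⟩ := hsingle
    exact ⟨{x}, by simpa, by simp, by simpa, by simpa⟩
  push Not at hsingle
  obtain ⟨w, hw, hfw⟩ : ∃ w ∈ s, f w = 1 := by
    obtain ⟨w, hw, hfw⟩ := Finset.exists_ne_zero_of_sum_ne_zero (hf ▸ one_ne_zero)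
    exact ⟨w, hw, Fin.eq_one_of_ne_zero _ hfw⟩
  have hgw : g w = d + 1 := (by decide : ∀ a b : ZMod 2, a ≠ b → a = b + 1) _ _ (hsingle w hw hfw)
  by_cases hpair : ∃ y ∈ s, f y = 0 ∧ g y = 1
  · obtain ⟨y, hy, hfy, hgy⟩ := hpair
    have hwy : w ≠ y := by rintro rfl; simp_all
    refine ⟨{w, y}, by simp [Finset.insert_subset_iff, hw, hy], Finset.card_le_two, ?_, ?_⟩ <;>
      rw [Finset.sum_pair hwy] <;> grind
  push Not at hpair
  -- the value of `g` is then forced by `f` on `s`, so that `∑ g = (d + 1) ∑ f = d + 1`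
  have hforced : ∀ a b c : ZMod 2, (a = 1 → b ≠ c) → (a = 0 → b ≠ 1) → b = (c + 1) * a := by
    decide
  have hsum : d = (d + 1) * ∑ x ∈ s, f x := by
    rw [Finset.mul_sum]
    exact Finset.sum_congr rfl fun x hx => hforced _ _ _ (hsingle x hx) (hpair x hx)
  grind

section Parity

variable [Finite V] (G : SimpleGraph V)

lemma even_cut_sdiff_of_ncard_le_two {S A : Set V}
    (heven : ∀ v ∈ S, Even (cut G (S \ {v}) {v})) (hAS : A ⊆ S) (hA : A.ncard ≤ 2) :
    Even (cut G (S \ A) A) := by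
  interval_cases hcard : A.ncard
  · simp [(Set.ncard_eq_zero (Set.toFinite A)).1 hcard, cut]
  · obtain ⟨x, rfl⟩ := Set.ncard_eq_one.1 hcard
    exact heven x (hAS rfl)
  · obtain ⟨x, y, hxy, rfl⟩ := Set.ncard_eq_two.1 hcard
    have hx : x ∈ S := hAS (by simp)
    have hy : y ∈ S := hAS (by simp)
    have hx_split : S \ {x} = S \ {x, y} ∪ {y} := by ext; simp; grind
    have hy_split : S \ {y} = S \ {x, y} ∪ {x} := by ext; simp; grind
    have hx_even := heven x hx
    have hy_even := heven y hy
    rw [hx_split, cut_union_left G _ (by simp)] at hx_even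
    rw [hy_split, cut_union_left G _ (by simp)] at hy_even
    have hpair := cut_union_right G (S \ {x, y}) (Set.disjoint_singleton.2 hxy)
    rw [Set.singleton_union] at hpair
    have := cut_comm G {y} {x}
    grind

lemma exists_subset_ncard_le_two_odd_cut {X Y S : Set V} (hXS : Odd (cut G X S))
    (heven : ∀ v ∈ S, Even (cut G (S \ {v}) {v})) :
    ∃ A ⊆ S, A.Nonempty ∧ A.ncard ≤ 2 ∧ Odd (cut G X A) ∧ Even (cut G Y (S \ A)) ∧
      Even (cut G (S \ A) A) := by
  classical
  obtain ⟨s, rfl⟩ := (Set.toFinite S).exists_finset_coe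
  have hcast (Z : Set V) (t : Finset V) :
      (cut G Z ↑t : ZMod 2) = ∑ v ∈ t, (cut G Z {v} : ZMod 2) := by
    rw [cut_finset_eq_sum, Nat.cast_sum]
  obtain ⟨a, has, ha, hXa, hYa⟩ := Finset.exists_subset_card_le_two_sum_eq s
    (fun v => (cut G X {v} : ZMod 2)) (fun v => (cut G Y {v} : ZMod 2))
    (by rwa [← hcast, ZMod.natCast_eq_one_iff_odd])
  rw [← hcast, ← hcast] at hYa
  rw [← hcast, ZMod.natCast_eq_one_iff_odd] at hXa
  have haS : (a : Set V) ⊆ s := Finset.coe_subset.2 has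
  have hYs := cut_union_right G Y (Set.disjoint_sdiff_left : Disjoint (↑s \ ↑a : Set V) ↑a)
  rw [Set.sdiff_union_of_subset haS] at hYs
  refine ⟨a, haS, ?_, by rwa [Set.ncard_coe_finset], hXa, ?_,
    even_cut_sdiff_of_ncard_le_two G heven haS (by rwa [Set.ncard_coe_finset])⟩
  · by_contra hempty
    rw [Set.not_nonempty_iff_eq_empty.1 hempty] at hXa
    simp [cut] at hXa
  · rw [← ZMod.natCast_eq_zero_iff_even]
    apply_fun ((↑) : ℕ → ZMod 2) at hYs
    push_cast at hYs
    grind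

end Parity

def SmallTail {k : ℕ} (P : Fin k → Set V) : Prop :=
  ∀ i : Fin k, 0 < i.val → (P i).ncard ≤ 2

lemma SmallTail.snoc {m : ℕ} {Q : Fin m → Set V} {A : Set V} (hQ : SmallTail Q)
    (hA : A.ncard ≤ 2) : SmallTail (Fin.snoc Q A : Fin (m + 1) → Set V) := by
  refine Fin.lastCases (fun _ => ?_) fun i hi => ?_
  · simpa using hA
  · simpa using hQ i hi

section Partition

variable {G : SimpleGraph V}

lemma GoodPartitionOn.exists_smallTail_of_snoc {m : ℕ} {W A : Set V} {Q : Fin (m + 1) → Set V}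
    (ih : ∀ {U : Set V} {Q : Fin (m + 1) → Set V}, GoodPartitionOn G U Q →
      (∀ Q' : Fin (m + 2) → Set V, ¬ GoodPartitionOn G U Q') →
      ∃ Q' : Fin (m + 1) → Set V, GoodPartitionOn G U Q' ∧ SmallTail Q')
    (hP : GoodPartitionOn G W (Fin.snoc Q A : Fin (m + 2) → Set V)) (hA : A.ncard ≤ 2)
    (hmax : ∀ P : Fin (m + 3) → Set V, ¬ GoodPartitionOn G W P) :
    ∃ P : Fin (m + 2) → Set V, GoodPartitionOn G W P ∧ SmallTail P := by
  obtain ⟨U, hQ, hA_ne, hUA, rfl, hUA_odd⟩ := goodPartitionOn_snoc_iff.1 hP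
  obtain ⟨Q', hQ', hsmall⟩ := ih hQ fun Q' hQ' =>
    hmax _ (goodPartitionOn_snoc_iff.2 ⟨U, hQ', hA_ne, hUA, rfl, fun _ => hUA_odd m.succ_pos⟩)
  exact ⟨_, goodPartitionOn_snoc_iff.2 ⟨U, hQ', hA_ne, hUA, rfl, hUA_odd⟩, hsmall.snoc hA⟩

variable [Finite V]

lemma GoodPartitionOn.snoc_snoc {m : ℕ} {U B C : Set V} {R : Fin m → Set V}
    (hR : GoodPartitionOn G U R) (hB : B.Nonempty) (hC : C.Nonempty) (hUB : Disjoint U B)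
    (hUC : Disjoint U C) (hBC : Disjoint B C) (hB_odd : 0 < m → Odd (cut G U B))
    (hC_odd : Odd (cut G U C + cut G B C)) :
    GoodPartitionOn G (U ∪ B ∪ C) (Fin.snoc (Fin.snoc R B : Fin (m + 1) → Set V) C) :=
  goodPartitionOn_snoc_iff.2 ⟨U ∪ B, goodPartitionOn_snoc_iff.2 ⟨U, hR, hB, hUB, rfl, hB_odd⟩,
    hC, hUC.union_left hBC, rfl, fun _ => by rwa [cut_union_left G C hUB]⟩

lemma GoodPartitionOn.even_cut_sdiff_singleton {m : ℕ} {W S : Set V} {R : Fin (m + 1) → Set V}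
    (hP : GoodPartitionOn G W (Fin.snoc R S : Fin (m + 2) → Set V))
    (hmax : ∀ Q : Fin (m + 3) → Set V, ¬ GoodPartitionOn G W Q)
    {v : V} (hv : v ∈ S) (hS : 1 < S.ncard) : Even (cut G (S \ {v}) {v}) := by
  obtain ⟨U, hR, -, hUS, rfl, hUS_odd⟩ := goodPartitionOn_snoc_iff.1 hP
  have hUS_odd := hUS_odd m.succ_pos
  by_contra hv_odd
  rw [Nat.not_even_iff_odd] at hv_odd
  obtain ⟨u, huS, huv⟩ := Set.exists_ne_of_one_lt_ncard hS v
  have hrest : (S \ {v}).Nonempty := ⟨u, huS, huv⟩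
  have hsplit : S = S \ {v} ∪ {v} :=
    (Set.sdiff_union_of_subset (Set.singleton_subset_iff.2 hv)).symm
  have hU_rest : Disjoint U (S \ {v}) := hUS.mono_right Set.sdiff_subset
  have hU_v : Disjoint U {v} := hUS.mono_right (Set.singleton_subset_iff.2 hv)
  have hcut := cut_union_right G U (Set.disjoint_sdiff_left : Disjoint (S \ {v}) {v})
  rw [← hsplit] at hcut
  -- split `S` into two classes, in the order dictated by the parity of `cut G U {v}`
  rcases Nat.even_or_odd (cut G U {v}) with hUv | hUv
  · apply hmax (Fin.snoc (Fin.snoc R (S \ {v}) : Fin (m + 2) → Set V) {v})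
    have := hR.snoc_snoc hrest (Set.singleton_nonempty v) hU_rest hU_v Set.disjoint_sdiff_left
      (fun _ => by grind) (by grind)
    rwa [Set.union_assoc, ← hsplit] at this
  · apply hmax (Fin.snoc (Fin.snoc R {v} : Fin (m + 2) → Set V) (S \ {v}))
    have := hR.snoc_snoc (Set.singleton_nonempty v) hrest hU_v hU_rest Set.disjoint_sdiff_right
      (fun _ => hUv) (by rw [cut_comm G {v}]; grind)
    rwa [Set.union_assoc, Set.union_comm {v}, ← hsplit] at this

lemma GoodPartitionOn.exists_snoc_snoc_ncard_le_two {m : ℕ} {W T S : Set V} {Q : Fin m → Set V}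
    (hP : GoodPartitionOn G W
      (Fin.snoc (Fin.snoc Q T : Fin (m + 1) → Set V) S : Fin (m + 2) → Set V))
    (hmax : ∀ P : Fin (m + 3) → Set V, ¬ GoodPartitionOn G W P) (hS : 1 < S.ncard) :
    ∃ B A, GoodPartitionOn G W (Fin.snoc (Fin.snoc Q B : Fin (m + 1) → Set V) A) ∧
      A.ncard ≤ 2 := by
  have heven (v) (hv : v ∈ S) := hP.even_cut_sdiff_singleton hmax hv hS
  obtain ⟨U, hR, -, hUS, rfl, hUS_odd⟩ := goodPartitionOn_snoc_iff.1 hP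
  obtain ⟨U', hQ, hT, hU'T, rfl, hU'T_odd⟩ := goodPartitionOn_snoc_iff.1 hR
  obtain ⟨hU'S, hTS⟩ := Set.disjoint_union_left.1 hUS
  obtain ⟨A, hAS, hA, hA2, hA_odd, hU'_even, hA_even⟩ :=
    exists_subset_ncard_le_two_odd_cut G (hUS_odd m.succ_pos) heven (Y := U')
  -- move all of `S` but `A` into the class `T`
  refine ⟨T ∪ S \ A, A, ?_, hA2⟩
  have hT_rest : Disjoint T (S \ A) := hTS.mono_right Set.sdiff_subset
  have := hQ.snoc_snoc (hT.mono Set.subset_union_left) hA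
    (hU'T.union_right (hU'S.mono_right Set.sdiff_subset)) (hU'S.mono_right hAS)
    ((hTS.mono_right hAS).union_left Set.disjoint_sdiff_left)
    (fun hm => by rw [cut_union_right G U' hT_rest]; grind)
    (by rw [cut_union_left G A hT_rest]; rw [cut_union_left G A hU'T] at hA_odd; grind)
  rwa [Set.union_assoc, Set.union_assoc, Set.sdiff_union_of_subset hAS, ← Set.union_assoc]
    at this

theorem GoodPartitionOn.exists_smallTail {k : ℕ} {W : Set V} {P : Fin k → Set V}
    (hP : GoodPartitionOn G W P) (hmax : ∀ Q : Fin (k + 1) → Set V, ¬ GoodPartitionOn G W Q) :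
    ∃ P' : Fin k → Set V, GoodPartitionOn G W P' ∧ SmallTail P' := by
  induction k generalizing W with
  | zero => exact ⟨P, hP, fun i => i.elim0⟩
  | succ k ih =>
    cases k with
    | zero => exact ⟨P, hP, fun i hi => absurd hi (by omega)⟩
    | succ m =>
      obtain ⟨R, S, rfl⟩ : ∃ R S, P = Fin.snoc R S := ⟨_, _, (Fin.snoc_init_self P).symm⟩
      obtain ⟨Q, T, rfl⟩ : ∃ Q T, R = Fin.snoc Q T := ⟨_, _, (Fin.snoc_init_self R).symm⟩
      by_cases hS : S.ncard ≤ 2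
      · exact hP.exists_smallTail_of_snoc ih hS hmax
      · obtain ⟨B, A, hBA, hA⟩ := hP.exists_snoc_snoc_ncard_le_two hmax (by omega)
        exact hBA.exists_smallTail_of_snoc ih hA hmax

end Partition

lemma KDualCritical.le_card [Finite V] {G : SimpleGraph V} {k : ℕ} (h : KDualCritical G k) :
    k ≤ Nat.card V := by
  obtain ⟨P, hne, hdisj, -, -⟩ := h
  choose f hf using hne
  have hf_inj : Function.Injective f := fun i j hij => by
    by_contra hij'
    exact Set.disjoint_left.1 (hdisj hij') (hf i) (hij ▸ hf j)
  simpa using Nat.card_le_card_of_injective f hf_inj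

lemma exists_kDualCritical (G : SimpleGraph V) : ∃ k, KDualCritical G k := by
  rcases isEmpty_or_nonempty V with hV | hV
  · exact ⟨0, Fin.elim0, fun i => i.elim0, fun i => i.elim0,
      by simp [Set.eq_empty_of_isEmpty Set.univ], fun i => i.elim0⟩
  · exact ⟨1, fun _ => Set.univ, fun _ => Set.univ_nonempty,
      fun i j hij => absurd (Subsingleton.elim i j) hij, Set.iUnion_const _,
      fun i hi => absurd hi (by omega)⟩

theorem stmt17 [Fintype V] (G : SimpleGraph V) (k : ℕ) (h : maxdc G = k) :
    ∃ P : Fin k → Set V, GoodPartition G P ∧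
      ∀ i : Fin k, 0 < i.val → (P i).ncard ≤ 2 := by
  have hbdd : BddAbove {k | KDualCritical G k} := ⟨Nat.card V, fun _ => KDualCritical.le_card⟩
  obtain ⟨P, hP⟩ : KDualCritical G k := h ▸ Nat.sSup_mem (exists_kDualCritical G) hbdd
  refine GoodPartitionOn.exists_smallTail hP fun Q hQ => ?_
  have : k + 1 ≤ maxdc G := le_csSup hbdd ⟨Q, hQ⟩
  omega
end
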